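/- arXiv:2501.16491 — 6 statements merged into one kernel-verified Lean document; each statement's English description precedes it below -/
import Mathlib

section
/- Let F : A → B be a morphism of bottom-split augmented simplicial objects in a category with pullbacks (simplicial objects equipped with augmentation A₋₁ ← A₀ and extra bottom degeneracies s₋₁ : Aₙ → Aₙ₊₁ splitting the bottom face maps, including a section s₋₁ : A₋₁ → A₀ of the augmentation). If F is cartesian on all top face maps d_⊤ and on all inner face maps (i.e., F is a left fibration on underlying simplicial objects), then the square with horizontal arrows the augmentation maps A₀ → A₋₁ and B₀ → B₋₁ and vertical arrows F₀ and F₋₁ is a pullback, and moreover F is cartesian on all face and degeneracy maps. -/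
open CategoryTheory Simplicial Opposite

/-!
The extra degeneracies `s₋₁` exhibit the square of `F` at the bottom face `d₀ : Xₙ₊₁ → Xₙ`
(resp. at the augmentation `q : X₀ → X₋₁`) as a retract of its square at the inner face
`d₁ : Xₙ₊₂ → Xₙ₊₁` (resp. `d₁ : X₁ → X₀`), which is cartesian by assumption; a retract of a
pullback square is a pullback square. Finally `σᵢ` is a section of `δᵢ₊₁`, so pasting the square
at `σᵢ` with the cartesian square at `δᵢ₊₁` gives the identity square, and the square at `σᵢ`
is cartesian by the pasting lemma.
-/

/-- A bottom-split augmented simplicial object: a simplicial object `X` with an augmentation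
`q : X₀ → X₋₁`, extra bottom degeneracies `s₋₁ = sm n : Xₙ → Xₙ₊₁` splitting the bottom face
maps, and a section `smA : X₋₁ → X₀` of the augmentation, satisfying the split-simplicial
identities. -/
structure BotSplitAug (C : Type*) [Category C] where
  X : SimplicialObject C
  pt : C
  q : X _⦋0⦌ ⟶ pt
  sm : ∀ n : ℕ, X _⦋n⦌ ⟶ X _⦋n+1⦌
  smA : pt ⟶ X _⦋0⦌
  sm_d0 : ∀ n : ℕ, sm n ≫ X.δ (0 : Fin (n + 2)) = 𝟙 _
  sm_d : ∀ (n : ℕ) (i : Fin (n + 2)), sm (n+1) ≫ X.δ i.succ = X.δ i ≫ sm n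
  sm_s : ∀ (n : ℕ) (i : Fin (n + 1)), sm n ≫ X.σ i.succ = X.σ i ≫ sm (n+1)
  smA_q : smA ≫ q = 𝟙 pt
  q_coeq : X.δ (0 : Fin 2) ≫ q = X.δ (1 : Fin 2) ≫ q
  sm_d1 : sm 0 ≫ X.δ (1 : Fin 2) = q ≫ smA
  smA_s : smA ≫ X.σ (0 : Fin 1) = smA ≫ sm 0

/-- The square `(d, f₁, f₀, d')` is a retract of the pullback square `(D, f₂, f₁, D')`, with
inclusion `(s, S, s', S')` and retraction `(d, E, E')`. -/
lemma CategoryTheory.IsPullback.of_retract {C : Type*} [Category C]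
    {X₀ X₁ X₂ Y₀ Y₁ Y₂ : C}
    {d : X₁ ⟶ X₀} {d' : Y₁ ⟶ Y₀} {f₀ : X₀ ⟶ Y₀} {f₁ : X₁ ⟶ Y₁} {f₂ : X₂ ⟶ Y₂}
    {D : X₂ ⟶ X₁} {D' : Y₂ ⟶ Y₁} {E : X₂ ⟶ X₁} {E' : Y₂ ⟶ Y₁}
    {s : X₀ ⟶ X₁} {s' : Y₀ ⟶ Y₁} {S : X₁ ⟶ X₂} {S' : Y₁ ⟶ Y₂}
    (hd : d ≫ f₀ = f₁ ≫ d') (hD : IsPullback D f₂ f₁ D') (hE : E ≫ f₁ = f₂ ≫ E')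
    (hs : s ≫ f₁ = f₀ ≫ s') (hS : S ≫ f₂ = f₁ ≫ S')
    (hsd : s ≫ d = 𝟙 X₀) (hSE : S ≫ E = 𝟙 X₁) (hS'E' : S' ≫ E' = 𝟙 Y₁)
    (hSD : S ≫ D = d ≫ s) (hS'D' : S' ≫ D' = d' ≫ s') (hED : E ≫ d = D ≫ d) :
    IsPullback d f₁ f₀ d' := by
  have hw : ∀ {T : C} {u : T ⟶ X₀} {v : T ⟶ Y₁}, u ≫ f₀ = v ≫ d' →
      (u ≫ s) ≫ f₁ = (v ≫ S') ≫ D' := fun hc => by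
    rw [Category.assoc, Category.assoc, hs, hS'D', ← Category.assoc, hc, Category.assoc]
  refine IsPullback.of_isLimit (Limits.PullbackCone.IsLimit.mk hd
    (fun c => hD.lift (c.fst ≫ s) (c.snd ≫ S') (hw c.condition) ≫ E) (fun c => ?_)
    (fun c => ?_) (fun c m hm₁ hm₂ => ?_))
  · rw [Category.assoc, hED, ← Category.assoc, hD.lift_fst, Category.assoc, hsd,
      Category.comp_id]
  · rw [Category.assoc, hE, ← Category.assoc, hD.lift_snd, Category.assoc, hS'E',
      Category.comp_id]
  · have hmS : m ≫ S = hD.lift (c.fst ≫ s) (c.snd ≫ S') (hw c.condition) := by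
      apply hD.hom_ext
      · rw [Category.assoc, hSD, ← Category.assoc, hm₁, hD.lift_fst]
      · rw [Category.assoc, hS, ← Category.assoc, hm₂, hD.lift_snd]
    rw [← hmS, Category.assoc, hSE, Category.comp_id]

namespace CategoryTheory.SimplicialObject

variable {C : Type*} [Category C] {X Y : SimplicialObject C}

lemma isPullback_σ_of_isPullback_δ_succ (F : X ⟶ Y) {n : ℕ} (i : Fin (n + 1))
    (h : IsPullback (X.δ i.succ) (F.app (op ⦋n + 1⦌)) (F.app (op ⦋n⦌)) (Y.δ i.succ)) :
    IsPullback (X.σ i) (F.app (op ⦋n⦌)) (F.app (op ⦋n + 1⦌)) (Y.σ i) := by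
  refine IsPullback.of_right ?_ (σ_naturality F i) h
  rw [δ_comp_σ_succ, δ_comp_σ_succ]
  exact IsPullback.of_id_fst

end CategoryTheory.SimplicialObject

namespace BotSplitAug

variable {C : Type*} [Category C] {A B : BotSplitAug C} (F : A.X ⟶ B.X)

lemma isPullback_δ_zero
    (hsm : ∀ n : ℕ, A.sm n ≫ F.app (op ⦋n + 1⦌) = F.app (op ⦋n⦌) ≫ B.sm n) (n : ℕ)
    (h : IsPullback (A.X.δ (1 : Fin (n + 3))) (F.app (op ⦋n + 2⦌)) (F.app (op ⦋n + 1⦌))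
      (B.X.δ 1)) :
    IsPullback (A.X.δ (0 : Fin (n + 2))) (F.app (op ⦋n + 1⦌)) (F.app (op ⦋n⦌))
      (B.X.δ 0) :=
  IsPullback.of_retract (SimplicialObject.δ_naturality F _) h
    (SimplicialObject.δ_naturality F _) (hsm n) (hsm (n + 1)) (A.sm_d0 n) (A.sm_d0 (n + 1))
    (B.sm_d0 (n + 1)) (by simpa using A.sm_d n 0) (by simpa using B.sm_d n 0)
    (A.X.δ_comp_δ (i := 0) (j := 0) le_rfl).symm

lemma isPullback_q {Fpt : A.pt ⟶ B.pt} (hq : F.app (op ⦋0⦌) ≫ B.q = A.q ≫ Fpt)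
    (hsm : A.sm 0 ≫ F.app (op ⦋1⦌) = F.app (op ⦋0⦌) ≫ B.sm 0)
    (hsmA : A.smA ≫ F.app (op ⦋0⦌) = Fpt ≫ B.smA)
    (h : IsPullback (A.X.δ (1 : Fin 2)) (F.app (op ⦋1⦌)) (F.app (op ⦋0⦌)) (B.X.δ 1)) :
    IsPullback A.q (F.app (op ⦋0⦌)) Fpt B.q :=
  IsPullback.of_retract hq.symm h (SimplicialObject.δ_naturality F _) hsmA hsm
    A.smA_q (A.sm_d0 0) (B.sm_d0 0) A.sm_d1 B.sm_d1 A.q_coeq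

end BotSplitAug

theorem leftFibration_of_botSplitAug_is_cartesian_general {C : Type*} [Category C]
    (A B : BotSplitAug C)
    (F : A.X ⟶ B.X) (Fpt : A.pt ⟶ B.pt)
    -- `F` is a morphism of bottom-split augmented simplicial objects:
    (hq : F.app (op (SimplexCategory.mk 0)) ≫ B.q = A.q ≫ Fpt)
    (hsm : ∀ n : ℕ, A.sm n ≫ F.app (op (SimplexCategory.mk (n+1))) =
      F.app (op (SimplexCategory.mk n)) ≫ B.sm n)
    (hsmA : A.smA ≫ F.app (op (SimplexCategory.mk 0)) = Fpt ≫ B.smA)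
    -- `F` is a left fibration:
    (hleft : ∀ (n : ℕ) (i : Fin (n + 2)), i ≠ 0 →
      IsPullback (A.X.δ i) (F.app (op (SimplexCategory.mk (n+1))))
        (F.app (op (SimplexCategory.mk n))) (B.X.δ i)) :
    IsPullback A.q (F.app (op (SimplexCategory.mk 0))) Fpt B.q ∧
    (∀ (n : ℕ) (i : Fin (n + 2)),
      IsPullback (A.X.δ i) (F.app (op (SimplexCategory.mk (n+1))))
        (F.app (op (SimplexCategory.mk n))) (B.X.δ i)) ∧
    (∀ (n : ℕ) (i : Fin (n + 1)),
      IsPullback (A.X.σ i) (F.app (op (SimplexCategory.mk n)))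
        (F.app (op (SimplexCategory.mk (n+1)))) (B.X.σ i)) := by
  have hδ : ∀ (n : ℕ) (i : Fin (n + 2)),
      IsPullback (A.X.δ i) (F.app (op ⦋n + 1⦌)) (F.app (op ⦋n⦌)) (B.X.δ i) := by
    intro n i
    by_cases hi : i = 0
    · subst hi
      exact BotSplitAug.isPullback_δ_zero F hsm n (hleft (n + 1) 1 one_ne_zero)
    · exact hleft n i hi
  exact ⟨BotSplitAug.isPullback_q F hq (hsm 0) hsmA (hleft 0 1 one_ne_zero), hδ,
    fun n i => SimplicialObject.isPullback_σ_of_isPullback_δ_succ F i (hδ n i.succ)⟩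

/-- Let `F : A → B` be a morphism of bottom-split augmented simplicial objects
in a category with pullbacks.  If `F` is a left fibration on underlying simplicial objects
(cartesian on all top and inner face maps, i.e. all `δ i` with `i ≠ 0`), then the
augmentation square is a pullback, and moreover `F` is cartesian on all face and all
degeneracy maps. -/
theorem leftFibration_of_botSplitAug_is_cartesian {C : Type*} [Category C]
    [Limits.HasPullbacks C] (A B : BotSplitAug C)
    (F : A.X ⟶ B.X) (Fpt : A.pt ⟶ B.pt)
    -- `F` is a morphism of bottom-split augmented simplicial objects:
    (hq : F.app (op (SimplexCategory.mk 0)) ≫ B.q = A.q ≫ Fpt)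
    (hsm : ∀ n : ℕ, A.sm n ≫ F.app (op (SimplexCategory.mk (n+1))) =
      F.app (op (SimplexCategory.mk n)) ≫ B.sm n)
    (hsmA : A.smA ≫ F.app (op (SimplexCategory.mk 0)) = Fpt ≫ B.smA)
    -- `F` is a left fibration:
    (hleft : ∀ (n : ℕ) (i : Fin (n + 2)), i ≠ 0 →
      IsPullback (A.X.δ i) (F.app (op (SimplexCategory.mk (n+1))))
        (F.app (op (SimplexCategory.mk n))) (B.X.δ i)) :
    IsPullback A.q (F.app (op (SimplexCategory.mk 0))) Fpt B.q ∧
    (∀ (n : ℕ) (i : Fin (n + 2)),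
      IsPullback (A.X.δ i) (F.app (op (SimplexCategory.mk (n+1))))
        (F.app (op (SimplexCategory.mk n))) (B.X.δ i)) ∧
    (∀ (n : ℕ) (i : Fin (n + 1)),
      IsPullback (A.X.σ i) (F.app (op (SimplexCategory.mk n)))
        (F.app (op (SimplexCategory.mk (n+1)))) (B.X.σ i)) :=
  leftFibration_of_botSplitAug_is_cartesian_general A B F Fpt hq hsm hsmA hleft
end

section
/- Let F : A → B be a morphism of bottom-split simplicial objects in a category with pullbacks which is a right fibration (cartesian on all bottom face maps d₀). Then F is cartesian on every extra bottom degeneracy map s₋₁ : Aₙ → Aₙ₊₁ for n ≥ 0, and if A and B are augmented, F is also cartesian on the augmentation splitting s₋₁ : A₋₁ → A₀, i.e., the square with horizontal arrows the splittings s₋₁ : A₋₁ → A₀, s₋₁ : B₋₁ → B₀ and vertical arrows F₋₁, F₀ is a pullback. -/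
/-!
Since `s₋₁ : Aₙ → Aₙ₊₁` is a section of `d₀`, its naturality square pasted with the cartesian
square at `d₀` is the identity square, so it is cartesian. The square at the augmentation
splitting `s₋₁ : A₋₁ → A₀` is a retract of the square at `s₋₁ : A₀ → A₁`, via `s₋₁, σ₀` and
`q, δ₁`, and a retract of a pullback square is a pullback square.
-/

open CategoryTheory Simplicial Opposite

namespace CategoryTheory

variable {C : Type*} [Category C]

theorem IsPullback.of_sections {X₁ X₂ Y₁ Y₂ : C} {s : X₁ ⟶ X₂} {d : X₂ ⟶ X₁}
    {s' : Y₁ ⟶ Y₂} {d' : Y₂ ⟶ Y₁} {f₁ : X₁ ⟶ Y₁} {f₂ : X₂ ⟶ Y₂}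
    (hd : IsPullback d f₂ f₁ d') (hs : s ≫ f₂ = f₁ ≫ s')
    (hsd : s ≫ d = 𝟙 X₁) (hsd' : s' ≫ d' = 𝟙 Y₁) : IsPullback s f₁ f₂ s' :=
  IsPullback.of_right (by rw [hsd, hsd']; exact IsPullback.of_id_fst) hs hd

open Limits in
theorem Square.IsPullback.of_retract {sq₁ sq₂ : Square C} (h : Retract sq₁ sq₂)
    (h₂ : sq₂.IsPullback) : sq₁.IsPullback := by
  have hr₁ : h.i.τ₁ ≫ h.r.τ₁ = 𝟙 sq₁.X₁ := congrArg Square.Hom.τ₁ h.retract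
  have hr₂ : h.i.τ₂ ≫ h.r.τ₂ = 𝟙 sq₁.X₂ := congrArg Square.Hom.τ₂ h.retract
  have hr₃ : h.i.τ₃ ≫ h.r.τ₃ = 𝟙 sq₁.X₃ := congrArg Square.Hom.τ₃ h.retract
  have w (c : PullbackCone sq₁.f₂₄ sq₁.f₃₄) :
      (c.fst ≫ h.i.τ₂) ≫ sq₂.f₂₄ = (c.snd ≫ h.i.τ₃) ≫ sq₂.f₃₄ := by
    simp only [Category.assoc, ← h.i.comm₂₄, ← h.i.comm₃₄, c.condition_assoc]
  refine CategoryTheory.IsPullback.of_isLimit (PullbackCone.IsLimit.mk sq₁.fac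
    (fun c ↦ h₂.lift _ _ (w c) ≫ h.r.τ₁) (fun c ↦ ?_) (fun c ↦ ?_) (fun c m hm₁ hm₂ ↦ ?_))
  · rw [Category.assoc, ← h.r.comm₁₂, h₂.lift_fst_assoc, Category.assoc, hr₂, Category.comp_id]
  · rw [Category.assoc, ← h.r.comm₁₃, h₂.lift_snd_assoc, Category.assoc, hr₃, Category.comp_id]
  · have hlift : m ≫ h.i.τ₁ = h₂.lift _ _ (w c) :=
      h₂.hom_ext (by rw [h₂.lift_fst, Category.assoc, ← h.i.comm₁₂, ← Category.assoc, hm₁])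
        (by rw [h₂.lift_snd, Category.assoc, ← h.i.comm₁₃, ← Category.assoc, hm₂])
    rw [← hlift, Category.assoc, hr₁, Category.comp_id]

end CategoryTheory

namespace BotSplitAug

variable {C : Type*} [Category C] {A B : BotSplitAug C} (F : A.X ⟶ B.X)

theorem isPullback_sm {n : ℕ}
    (hsm : A.sm n ≫ F.app (op ⦋n + 1⦌) = F.app (op ⦋n⦌) ≫ B.sm n)
    (hδ₀ : IsPullback (A.X.δ 0) (F.app (op ⦋n + 1⦌)) (F.app (op ⦋n⦌)) (B.X.δ 0)) :
    IsPullback (A.sm n) (F.app (op ⦋n⦌)) (F.app (op ⦋n + 1⦌)) (B.sm n) :=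
  hδ₀.of_sections hsm (A.sm_d0 n) (B.sm_d0 n)

theorem isPullback_smA (Fpt : A.pt ⟶ B.pt) (hq : F.app (op ⦋0⦌) ≫ B.q = A.q ≫ Fpt)
    (hsmA : A.smA ≫ F.app (op ⦋0⦌) = Fpt ≫ B.smA)
    (hsm₀ : IsPullback (A.sm 0) (F.app (op ⦋0⦌)) (F.app (op ⦋1⦌)) (B.sm 0)) :
    IsPullback A.smA Fpt (F.app (op ⦋0⦌)) B.smA := by
  refine Square.IsPullback.of_retract (sq₁ := Square.mk _ _ _ _ hsmA)
    (sq₂ := Square.mk _ _ _ _ hsm₀.w) ⟨?_, ?_, ?_⟩ hsm₀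
  · exact
      { τ₁ := A.smA, τ₂ := A.X.σ 0, τ₃ := B.smA, τ₄ := B.X.σ 0
        comm₁₂ := A.smA_s
        comm₁₃ := hsmA.symm
        comm₂₄ := (SimplicialObject.σ_naturality F 0).symm
        comm₃₄ := B.smA_s }
  · exact
      { τ₁ := A.q, τ₂ := A.X.δ 1, τ₃ := B.q, τ₄ := B.X.δ 1
        comm₁₂ := A.sm_d1
        comm₁₃ := hq
        comm₂₄ := (SimplicialObject.δ_naturality F 1).symm
        comm₃₄ := B.sm_d1 }
  · ext
    · exact A.smA_q
    · exact A.X.δ_comp_σ_succ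
    · exact B.smA_q
    · exact B.X.δ_comp_σ_succ

end BotSplitAug

theorem rightFibration_cartesian_on_splittings_general {C : Type*} [Category C]
    (A B : BotSplitAug C)
    (F : A.X ⟶ B.X) (Fpt : A.pt ⟶ B.pt)
    -- `F` is a morphism of bottom-split augmented simplicial objects:
    (hq : F.app (op (SimplexCategory.mk 0)) ≫ B.q = A.q ≫ Fpt)
    (hsm : ∀ n : ℕ, A.sm n ≫ F.app (op (SimplexCategory.mk (n+1))) =
      F.app (op (SimplexCategory.mk n)) ≫ B.sm n)
    (hsmA : A.smA ≫ F.app (op (SimplexCategory.mk 0)) = Fpt ≫ B.smA)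
    -- `F` is a right fibration:
    (hright : ∀ (n : ℕ) (i : Fin (n + 2)), i ≠ Fin.last (n+1) →
      IsPullback (A.X.δ i) (F.app (op (SimplexCategory.mk (n+1))))
        (F.app (op (SimplexCategory.mk n))) (B.X.δ i)) :
    (∀ n : ℕ, IsPullback (A.sm n) (F.app (op (SimplexCategory.mk n)))
      (F.app (op (SimplexCategory.mk (n+1)))) (B.sm n)) ∧
    IsPullback A.smA Fpt (F.app (op (SimplexCategory.mk 0))) B.smA := by
  have hsm_pb (n : ℕ) := BotSplitAug.isPullback_sm F (hsm n) (hright n 0 Fin.last_pos.ne)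
  exact ⟨hsm_pb, BotSplitAug.isPullback_smA F Fpt hq hsmA (hsm_pb 0)⟩

/-- Let `F : A → B` be a morphism of bottom-split (augmented) simplicial
objects in a category with pullbacks which is a right fibration (cartesian on all face maps
except the top ones, in particular on all bottom face maps).  Then `F` is cartesian on every
extra bottom degeneracy `s₋₁ : Aₙ → Aₙ₊₁` (`n ≥ 0`), and also on the augmentation splitting
`s₋₁ : A₋₁ → A₀`, i.e. the square with horizontal arrows the splittings and vertical arrows
`F₋₁`, `F₀` is a pullback. -/
theorem rightFibration_cartesian_on_splittings {C : Type*} [Category C]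
    [Limits.HasPullbacks C] (A B : BotSplitAug C)
    (F : A.X ⟶ B.X) (Fpt : A.pt ⟶ B.pt)
    -- `F` is a morphism of bottom-split augmented simplicial objects:
    (hq : F.app (op (SimplexCategory.mk 0)) ≫ B.q = A.q ≫ Fpt)
    (hsm : ∀ n : ℕ, A.sm n ≫ F.app (op (SimplexCategory.mk (n+1))) =
      F.app (op (SimplexCategory.mk n)) ≫ B.sm n)
    (hsmA : A.smA ≫ F.app (op (SimplexCategory.mk 0)) = Fpt ≫ B.smA)
    -- `F` is a right fibration:
    (hright : ∀ (n : ℕ) (i : Fin (n + 2)), i ≠ Fin.last (n+1) →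
      IsPullback (A.X.δ i) (F.app (op (SimplexCategory.mk (n+1))))
        (F.app (op (SimplexCategory.mk n))) (B.X.δ i)) :
    (∀ n : ℕ, IsPullback (A.sm n) (F.app (op (SimplexCategory.mk n)))
      (F.app (op (SimplexCategory.mk (n+1)))) (B.sm n)) ∧
    IsPullback A.smA Fpt (F.app (op (SimplexCategory.mk 0))) B.smA :=
  rightFibration_cartesian_on_splittings_general A B F Fpt hq hsm hsmA hright
end

section
/- Let C be a category with pullbacks and let F : C' → C be a right fibration of simplicial objects in C, i.e. F is cartesian on all bottom face maps. If C carries a coalgebra structure γ : C → Dec_⊥(C) for the lower decalage comonad, then C' acquires a Dec_⊥-coalgebra structure γ' : C' → Dec_⊥(C') obtained by pullback, and it is the unique such structure making F a morphism of Dec_⊥-coalgebras. -/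
open CategoryTheory Simplicial Opposite

/-- A `Dec_⊥`-coalgebra structure on a simplicial object `X`: a simplicial map
`γ : X ⟶ Dec_⊥(X)` (the faces of `Dec_⊥(X)` are `X.δ i.succ`, degeneracies `X.σ i.succ`)
such that `ε ∘ γ = id` and `Dec_⊥(γ) ∘ γ = δ ∘ γ` (counit and coassociativity laws for the
lower decalage comonad, whose counit is degreewise `d₀` and comultiplication degreewise `s₀`). -/
structure DecBotCoalg {C : Type*} [Category C] (X : SimplicialObject C) where
  γ : ∀ n : ℕ, X _⦋n⦌ ⟶ X _⦋n+1⦌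
  nat_δ : ∀ (n : ℕ) (i : Fin (n + 2)), X.δ i ≫ γ n = γ (n+1) ≫ X.δ i.succ
  nat_σ : ∀ (n : ℕ) (i : Fin (n + 1)), X.σ i ≫ γ (n+1) = γ n ≫ X.σ i.succ
  counit : ∀ n : ℕ, γ n ≫ X.δ (0 : Fin (n + 2)) = 𝟙 _
  coassoc : ∀ n : ℕ, γ n ≫ γ (n+1) = γ n ≫ X.σ (0 : Fin (n + 2))

/-- If `F : C' → C` is a right fibration of simplicial objects (cartesian on all
bottom face maps) in a category with pullbacks, then a `Dec_⊥`-coalgebra structure on `C`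
induces one on `C'`, uniquely determined by the requirement that `F` become a morphism of
`Dec_⊥`-coalgebras. -/
theorem decBotCoalg_lift_of_rightFibration {E : Type*} [Category E]
    [Limits.HasPullbacks E] (C' C : SimplicialObject E) (F : C' ⟶ C)
    (hF : ∀ n : ℕ, IsPullback (C'.δ (0 : Fin (n + 2)))
      (F.app (op (SimplexCategory.mk (n+1)))) (F.app (op (SimplexCategory.mk n)))
      (C.δ (0 : Fin (n + 2))))
    (γ : DecBotCoalg C) :
    ∃! γ' : DecBotCoalg C',
      ∀ n : ℕ, γ'.γ n ≫ F.app (op (SimplexCategory.mk (n+1))) =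
        F.app (op (SimplexCategory.mk n)) ≫ γ.γ n := by

  have natδ : ∀ (n : ℕ) (i : Fin (n+2)),
      C'.δ i ≫ F.app (op (SimplexCategory.mk n))
        = F.app (op (SimplexCategory.mk (n+1))) ≫ C.δ i := by
    intro n i
    exact F.naturality (SimplexCategory.δ i).op
  have natσ : ∀ (n : ℕ) (i : Fin (n+1)),
      C'.σ i ≫ F.app (op (SimplexCategory.mk (n+1)))
        = F.app (op (SimplexCategory.mk n)) ≫ C.σ i := by
    intro n i
    exact F.naturality (SimplexCategory.σ i).op
  have w : ∀ n : ℕ, 𝟙 (C' _⦋n⦌) ≫ F.app (op (SimplexCategory.mk n))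
      = (F.app (op (SimplexCategory.mk n)) ≫ γ.γ n) ≫ C.δ (0 : Fin (n+2)) := by
    intro n
    simp [γ.counit n]
  let g : ∀ n : ℕ, C' _⦋n⦌ ⟶ C' _⦋n+1⦌ := fun n =>
    (hF n).lift (𝟙 _) (F.app (op (SimplexCategory.mk n)) ≫ γ.γ n) (w n)
  have hg1 : ∀ n : ℕ, g n ≫ C'.δ (0 : Fin (n+2)) = 𝟙 _ := fun n => (hF n).lift_fst _ _ _
  have hg2 : ∀ n : ℕ, g n ≫ F.app (op (SimplexCategory.mk (n+1)))
      = F.app (op (SimplexCategory.mk n)) ≫ γ.γ n := fun n => (hF n).lift_snd _ _ _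
  have hδδ : ∀ (n : ℕ) (i : Fin (n+2)),
      C'.δ i.succ ≫ C'.δ (0 : Fin (n+2)) = C'.δ (0 : Fin (n+3)) ≫ C'.δ i := by
    intro n i
    simpa using C'.δ_comp_δ (i := 0) (j := i) (Fin.zero_le i)
  refine ⟨⟨g, ?_, ?_, hg1, ?_⟩, fun n => hg2 n, ?_⟩
  · intro n i
    apply (hF n).hom_ext
    · rw [Category.assoc, hg1 n, Category.comp_id, Category.assoc, hδδ n i,
        reassoc_of% hg1 (n+1)]
    · rw [Category.assoc, hg2 n, reassoc_of% natδ n i, γ.nat_δ n i,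
        Category.assoc, natδ (n+1) i.succ, reassoc_of% hg2 (n+1)]
  · intro n i
    apply (hF (n+1)).hom_ext
    · have hσδ : C'.σ i.succ ≫ C'.δ (0 : Fin (n+3)) = C'.δ (0 : Fin (n+2)) ≫ C'.σ i := by
        simpa using C'.δ_comp_σ_of_le (i := 0) (j := i) (Fin.zero_le _)
      rw [Category.assoc, hg1 (n+1), Category.comp_id, Category.assoc, hσδ,
        reassoc_of% hg1 n]
    · rw [Category.assoc, hg2 (n+1), reassoc_of% natσ n i, γ.nat_σ n i,
        Category.assoc, natσ (n+1) i.succ, reassoc_of% hg2 n]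
  · intro n
    apply (hF (n+1)).hom_ext
    · have hσδ : C'.σ (0 : Fin (n+2)) ≫ C'.δ (0 : Fin (n+3)) = 𝟙 _ := by
        simpa using C'.δ_comp_σ_self (i := (0 : Fin (n+2)))
      rw [Category.assoc, hg1 (n+1), Category.comp_id, Category.assoc, hσδ,
        Category.comp_id]
    · have hσF : C'.σ (0 : Fin (n+2)) ≫ F.app (op (SimplexCategory.mk (n+2)))
          = F.app (op (SimplexCategory.mk (n+1))) ≫ C.σ (0 : Fin (n+2)) :=
        F.naturality (SimplexCategory.σ (0 : Fin (n+2))).op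
      rw [Category.assoc, hg2 (n+1), reassoc_of% hg2 n, γ.coassoc n,
        Category.assoc, hσF, reassoc_of% hg2 n]
  · intro γ'' hγ''
    have h : γ''.γ = g := by
      funext n
      apply (hF n).hom_ext
      · rw [hg1 n, γ''.counit n]
      · rw [hg2 n, hγ'' n]
    cases γ''
    simp only at h
    subst h
    rfl
end

section
/- Let X be a simplicial object in a category with pullbacks and let γ : X → Dec_⊥(X) be a simplicial map satisfying ε ∘ γ = id. If γ is cartesian (all its naturality squares are pullbacks), then γ equals the Dec_⊥-coalgebra structure on X obtained by pulling back the canonical coalgebra structure δ : Dec_⊥(X) → Dec_⊥²(X) along γ; in particular γ satisfies the coassociativity axiom Dec_⊥(γ) ∘ γ = δ ∘ γ and is a rigid Dec_⊥-coalgebra. -/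
/-!
Write `s₋₁ := γ` for the extra degeneracy. For `x ∈ X_n` the simplex `b := s₀ s₋₁ x ∈ X_{n+2}` has
`d₁ b = s₋₁ x`, so `(x, b)` lies in the pullback `X_n ×_{X_{n+1}} X_{n+2}`, which is `X_{n+1}` because
the `d₀`-square of `γ` is cartesian: `b = s₋₁ c` for some `c`. The counit then recovers `c` as
`d₀ s₋₁ c = d₀ s₀ s₋₁ x = s₋₁ x`, whence `s₋₁ s₋₁ x = s₀ s₋₁ x`.
-/

open CategoryTheory Simplicial Opposite

namespace CategoryTheory.IsPullback

variable {C : Type*} [Category C] {P A B D : C} {f : P ⟶ A} {g : P ⟶ B} {h : A ⟶ D} {k : B ⟶ D}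

theorem comp_retraction_comp_snd (sq : IsPullback f g h k) {r : B ⟶ P} (hr : g ≫ r = 𝟙 P)
    {Z : C} (a : Z ⟶ A) (b : Z ⟶ B) (w : a ≫ h = b ≫ k) : (b ≫ r) ≫ g = b := by
  have hlift : sq.lift a b w = b ≫ r :=
    calc sq.lift a b w = sq.lift a b w ≫ g ≫ r := by rw [hr, Category.comp_id]
      _ = b ≫ r := by rw [← Category.assoc, sq.lift_snd]
  rw [← hlift, sq.lift_snd]

end CategoryTheory.IsPullback

theorem rigid_coalg_of_cartesian_counit_general {C : Type*} [Category C]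
    (X : SimplicialObject C)
    (γ : ∀ n : ℕ, X _⦋n⦌ ⟶ X _⦋n+1⦌)
    -- `ε ∘ γ = id`:
    (counit : ∀ n : ℕ, γ n ≫ X.δ (0 : Fin (n + 2)) = 𝟙 _)
    -- `γ` is cartesian:
    (cart_δ : ∀ (n : ℕ) (i : Fin (n + 2)),
      IsPullback (X.δ i) (γ (n+1)) (γ n) (X.δ i.succ)) :
    ∀ n : ℕ, γ n ≫ γ (n+1) = γ n ≫ X.σ (0 : Fin (n + 2)) := by
  intro n
  have hface : 𝟙 _ ≫ γ n = (γ n ≫ X.σ 0) ≫ X.δ (0 : Fin (n + 2)).succ := by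
    rw [Category.id_comp, Category.assoc, X.δ_comp_σ_succ, Category.comp_id]
  have hlift := (cart_δ n 0).comp_retraction_comp_snd (counit (n + 1)) (𝟙 _) _ hface
  rwa [Category.assoc, Category.assoc, X.δ_comp_σ_self'_assoc (by rfl)] at hlift

/-- Let `γ : X → Dec_⊥(X)` be a simplicial map (with components
`γ n : X_n → X_{n+1}`, where the faces of `Dec_⊥(X)` are `X.δ i.succ` and its degeneracies
are `X.σ i.succ`) satisfying `ε ∘ γ = id` (i.e. `γ n ≫ X.δ 0 = 𝟙`).  If `γ` is cartesian
(all its naturality squares are pullbacks), then `γ` satisfies the coassociativity axiom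
`Dec_⊥(γ) ∘ γ = δ ∘ γ` (degreewise: `γ n ≫ γ (n+1) = γ n ≫ X.σ 0`), i.e. `γ` is a rigid
`Dec_⊥`-coalgebra structure (obtained by pulling back the canonical coalgebra structure on
`Dec_⊥(X)` along `γ`). -/
theorem rigid_coalg_of_cartesian_counit {C : Type*} [Category C]
    [Limits.HasPullbacks C] (X : SimplicialObject C)
    (γ : ∀ n : ℕ, X _⦋n⦌ ⟶ X _⦋n+1⦌)
    -- `γ` is a simplicial map `X ⟶ Dec_⊥ X`:
    (nat_δ : ∀ (n : ℕ) (i : Fin (n + 2)), X.δ i ≫ γ n = γ (n+1) ≫ X.δ i.succ)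
    (nat_σ : ∀ (n : ℕ) (i : Fin (n + 1)), X.σ i ≫ γ (n+1) = γ n ≫ X.σ i.succ)
    -- `ε ∘ γ = id`:
    (counit : ∀ n : ℕ, γ n ≫ X.δ (0 : Fin (n + 2)) = 𝟙 _)
    -- `γ` is cartesian:
    (cart_δ : ∀ (n : ℕ) (i : Fin (n + 2)),
      IsPullback (X.δ i) (γ (n+1)) (γ n) (X.δ i.succ))
    (cart_σ : ∀ (n : ℕ) (i : Fin (n + 1)),
      IsPullback (X.σ i) (γ n) (γ (n+1)) (X.σ i.succ)) :
    ∀ n : ℕ, γ n ≫ γ (n+1) = γ n ≫ X.σ (0 : Fin (n + 2)) :=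
  rigid_coalg_of_cartesian_counit_general X γ counit cart_δ
end

section
/- Every morphism g in the abacus category 𝒟 factors as g = g_simp ∘ g_ab, where g_ab is a composite of abacus maps and g_simp is a morphism lying in the subcategory Δ_{/[1]} ⊂ 𝒟 (i.e., a map preserving the black/white colouring). -/
open CategoryTheory

/-- Objects of the abacus category `𝒟`: the object `[i,j]` (for `i,j ≥ -1`, not both `-1`)
is encoded by `ip = i+1`, `jp = j+1`, i.e. by the numbers of black and white beads; it
corresponds to the map `(d^⊤)^{∘(1+j)} : [i] → [i+1+j]` in the arrow category of `Δ₊`. -/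
structure DObj where
  ip : ℕ
  jp : ℕ
  pos : 0 < ip + jp

theorem DObj.ext2 {a b a' b' : ℕ} {h : 0 < a + b} {h' : 0 < a' + b'}
    (ha : a = a') (hb : b = b') : (⟨a, b, h⟩ : DObj) = ⟨a', b', h'⟩ := by
  subst ha; subst hb; rfl

/-- A morphism `[i,j] → [i',j']` of `𝒟` is a commutative square of monotone maps over the
structure maps; equivalently, a monotone map of the target ordinals sending black beads
(the first `ip` elements, i.e. the image of the structure map) to black beads. -/
@[ext] structure DHom (A B : DObj) where
  toFun : Fin (A.ip + A.jp) → Fin (B.ip + B.jp)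
  mono : Monotone toFun
  black : ∀ k : Fin (A.ip + A.jp), (k : ℕ) < A.ip → (toFun k : ℕ) < B.ip

instance : Category DObj where
  Hom := DHom
  id A := ⟨id, monotone_id, fun _ h => h⟩
  comp f g := ⟨g.toFun ∘ f.toFun, g.mono.comp f.mono, fun k hk => g.black _ (f.black k hk)⟩
  id_comp f := by apply DHom.ext; rfl
  comp_id f := by apply DHom.ext; rfl
  assoc f g h := by apply DHom.ext; rfl

/-- The vertical coface map `e^k : [i,j] → [i+1,j]`, `0 ≤ k ≤ i+1`. -/
def eM (a b : ℕ) (h : 0 < a + b) (k : Fin (a + 1)) :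
    (⟨a, b, h⟩ : DObj) ⟶ ⟨a + 1, b, by omega⟩ where
  toFun x := ⟨if (x : ℕ) < (k : ℕ) then (x : ℕ) else (x : ℕ) + 1, by
    have hx : (x : ℕ) < a + b := x.isLt
    show (if (x : ℕ) < (k : ℕ) then (x : ℕ) else (x : ℕ) + 1) < (a + 1) + b
    split_ifs <;> omega⟩
  mono := by
    intro x y hxy
    have hxy' : (x : ℕ) ≤ (y : ℕ) := hxy
    simp only [Fin.mk_le_mk]
    split_ifs <;> omega
  black := by
    intro x hx
    have hx' : (x : ℕ) < a := hx
    have hk : (k : ℕ) < a + 1 := k.isLt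
    show (if (x : ℕ) < (k : ℕ) then (x : ℕ) else (x : ℕ) + 1) < a + 1
    split_ifs <;> omega

/-- The horizontal coface map `d^k : [i,j] → [i,j+1]`, `0 ≤ k ≤ j+1`. -/
def dM (a b : ℕ) (h : 0 < a + b) (k : Fin (b + 1)) :
    (⟨a, b, h⟩ : DObj) ⟶ ⟨a, b + 1, by omega⟩ where
  toFun x := ⟨if (x : ℕ) < a + (k : ℕ) then (x : ℕ) else (x : ℕ) + 1, by
    have hx : (x : ℕ) < a + b := x.isLt
    show (if (x : ℕ) < a + (k : ℕ) then (x : ℕ) else (x : ℕ) + 1) < a + (b + 1)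
    split_ifs <;> omega⟩
  mono := by
    intro x y hxy
    have hxy' : (x : ℕ) ≤ (y : ℕ) := hxy
    simp only [Fin.mk_le_mk]
    split_ifs <;> omega
  black := by
    intro x hx
    have hx' : (x : ℕ) < a := hx
    show (if (x : ℕ) < a + (k : ℕ) then (x : ℕ) else (x : ℕ) + 1) < a
    split_ifs <;> omega

/-- The abacus map `f : [i,j+1] → [i+1,j]`: the identity on underlying ordinals, turning the
bottom white bead into a black bead. -/
def fM (a b : ℕ) : (⟨a, b + 1, by omega⟩ : DObj) ⟶ ⟨a + 1, b, by omega⟩ where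
  toFun x := ⟨(x : ℕ), by
    have hx : (x : ℕ) < a + (b + 1) := x.isLt
    show (x : ℕ) < (a + 1) + b
    omega⟩
  mono := by intro x y hxy; exact hxy
  black := by
    intro x hx
    have hx' : (x : ℕ) < a := hx
    show (x : ℕ) < a + 1
    omega

/-- The vertical codegeneracy map `t^k : [i+1,j] → [i,j]`, `0 ≤ k ≤ i`. -/
def tM (a b : ℕ) (h : 0 < a + b) (k : Fin a) :
    (⟨a + 1, b, by omega⟩ : DObj) ⟶ ⟨a, b, h⟩ where
  toFun x := ⟨if (x : ℕ) ≤ (k : ℕ) then (x : ℕ) else (x : ℕ) - 1, by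
    have hx : (x : ℕ) < (a + 1) + b := x.isLt
    have hk : (k : ℕ) < a := k.isLt
    show (if (x : ℕ) ≤ (k : ℕ) then (x : ℕ) else (x : ℕ) - 1) < a + b
    split_ifs <;> omega⟩
  mono := by
    intro x y hxy
    have hxy' : (x : ℕ) ≤ (y : ℕ) := hxy
    simp only [Fin.mk_le_mk]
    split_ifs <;> omega
  black := by
    intro x hx
    have hx' : (x : ℕ) < a + 1 := hx
    have hk : (k : ℕ) < a := k.isLt
    show (if (x : ℕ) ≤ (k : ℕ) then (x : ℕ) else (x : ℕ) - 1) < a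
    split_ifs <;> omega

/-- The horizontal codegeneracy map `s^k : [i,j+1] → [i,j]`, `0 ≤ k ≤ j`. -/
def sM (a b : ℕ) (h : 0 < a + b) (k : Fin b) :
    (⟨a, b + 1, by omega⟩ : DObj) ⟶ ⟨a, b, h⟩ where
  toFun x := ⟨if (x : ℕ) ≤ a + (k : ℕ) then (x : ℕ) else (x : ℕ) - 1, by
    have hx : (x : ℕ) < a + (b + 1) := x.isLt
    have hk : (k : ℕ) < b := k.isLt
    show (if (x : ℕ) ≤ a + (k : ℕ) then (x : ℕ) else (x : ℕ) - 1) < a + b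
    split_ifs <;> omega⟩
  mono := by
    intro x y hxy
    have hxy' : (x : ℕ) ≤ (y : ℕ) := hxy
    simp only [Fin.mk_le_mk]
    split_ifs <;> omega
  black := by
    intro x hx
    have hx' : (x : ℕ) < a := hx
    show (if (x : ℕ) ≤ a + (k : ℕ) then (x : ℕ) else (x : ℕ) - 1) < a
    split_ifs <;> omega

/-- The `k`-fold composite `f^{∘k} : [i,j] → [i+k, j-k]` of abacus maps. -/
def fIter (a b : ℕ) (h : 0 < a + b) : (k : ℕ) → k ≤ b →
    ((⟨a, b, h⟩ : DObj) ⟶ ⟨a + k, b - k, by omega⟩)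
  | 0, _ => 𝟙 _
  | (k + 1), hk =>
      fIter a b h k (by omega) ≫ eqToHom (DObj.ext2 rfl (by omega)) ≫
        fM (a + k) (b - (k + 1))

theorem eqToHom_coe {A B : DObj} (h : A = B) (x : Fin (A.ip + A.jp)) :
    (((eqToHom h : A ⟶ B)).toFun x : ℕ) = (x : ℕ) := by
  subst h; rfl

theorem fIter_coe (a b : ℕ) (h : 0 < a + b) (k : ℕ) (hk : k ≤ b)
    (x : Fin (a + b)) : (((fIter a b h k hk).toFun x) : ℕ) = (x : ℕ) := by
  induction k with
  | zero => rfl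
  | succ k ih =>
      show ((fM (a + k) (b - (k + 1))).toFun
        ((eqToHom (DObj.ext2 rfl (by omega))).toFun
          ((fIter a b h k (by omega)).toFun x)) : ℕ) = (x : ℕ)
      rw [show ∀ y, ((fM (a + k) (b - (k + 1))).toFun y : ℕ) = (y : ℕ) from fun _ => rfl,
        eqToHom_coe, ih]

/-- Every morphism `g` of the abacus category `𝒟` factors as
`g = g_simp ∘ g_ab`, where `g_ab = f^{∘k}` is a composite of abacus maps and `g_simp` lies
in the subcategory `Δ_{/[1]} ⊂ 𝒟`, i.e. it preserves the black/white colouring (it maps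
black beads to black beads — automatic for all morphisms of `𝒟` — and white beads to white
beads). -/
theorem abacus_factorization (A B : DObj) (g : A ⟶ B) :
    ∃ (k : ℕ) (hk : k ≤ A.jp)
      (gs : (⟨A.ip + k, A.jp - k, by have := A.pos; omega⟩ : DObj) ⟶ B),
      (∀ x : Fin ((A.ip + k) + (A.jp - k)), A.ip + k ≤ (x : ℕ) → B.ip ≤ (gs.toFun x : ℕ)) ∧
      g = fIter A.ip A.jp A.pos k hk ≫ gs := by
  classical
  obtain ⟨a, b, hab⟩ := A
  obtain ⟨a', b', hab'⟩ := B
  dsimp only at g ⊢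
  -- choose m : the least index mapped to a white bead of B (or the size if none)
  by_cases hall : ∀ x : Fin (a + b), (g.toFun x : ℕ) < a'
  · -- k = b
    refine ⟨b, le_refl b, ?_, ?_, ?_⟩
    · exact ⟨fun x => g.toFun ⟨(x : ℕ), by have hxl : (x : ℕ) < (a + b) + (b - b) := x.isLt; show (x : ℕ) < a + b; omega⟩,
        fun x y hxy => g.mono (by simpa using hxy),
        fun x hx => hall _⟩
    · intro x hx
      have hxl := x.isLt
      try dsimp only at hx hxl
      omega
    · apply DHom.ext; funext x; apply Fin.ext
      symm
      show (g.toFun ⟨((fIter a b hab b le_rfl).toFun x : ℕ), _⟩ : ℕ) = (g.toFun x : ℕ)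
      exact congrArg (fun y => (g.toFun y : ℕ)) (Fin.ext (fIter_coe a b hab b le_rfl x))
  · push_neg at hall
    have hex : ∃ n, ∃ hn : n < a + b, a' ≤ (g.toFun ⟨n, hn⟩ : ℕ) := by
      obtain ⟨x, hx⟩ := hall
      exact ⟨(x : ℕ), x.isLt, by simpa using hx⟩
    have H := Nat.find_spec hex
    have Hmin : ∀ n, n < Nat.find hex → ¬ ∃ hn : n < a + b, a' ≤ (g.toFun ⟨n, hn⟩ : ℕ) :=
      fun n h => Nat.find_min hex h
    generalize hg : Nat.find hex = m at H Hmin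
    obtain ⟨hm, hmw⟩ := H
    have ham : a ≤ m := by
      by_contra hlt
      push_neg at hlt
      have := g.black ⟨m, hm⟩ hlt
      dsimp only at this
      omega
    have hlow : ∀ n (hn : n < a + b), n < m → (g.toFun ⟨n, hn⟩ : ℕ) < a' := by
      intro n hn hnm
      have := Hmin n hnm
      push_neg at this
      exact this hn
    have hhigh : ∀ n (hn : n < a + b), m ≤ n → a' ≤ (g.toFun ⟨n, hn⟩ : ℕ) := by
      intro n hn hmn
      exact le_trans hmw (g.mono (show (⟨m, hm⟩ : Fin (a+b)) ≤ ⟨n, hn⟩ from hmn))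
    refine ⟨m - a, by omega, ?_, ?_, ?_⟩
    · exact ⟨fun x => g.toFun ⟨(x : ℕ), by have hxl : (x : ℕ) < (a + (m - a)) + (b - (m - a)) := x.isLt; show (x : ℕ) < a + b; omega⟩,
        fun x y hxy => g.mono (by simpa using hxy),
        fun x hx => hlow _ _ (by
          have hxl := x.isLt
          try dsimp only at hx hxl
          omega)⟩
    · intro x hx
      have hxl := x.isLt
      try dsimp only at hx hxl
      exact hhigh _ _ (by omega)
    · apply DHom.ext; funext x; apply Fin.ext
      symm
      show (g.toFun ⟨((fIter a b hab (m - a) (by omega)).toFun x : ℕ), _⟩ : ℕ)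
        = (g.toFun x : ℕ)
      exact congrArg (fun y => (g.toFun y : ℕ)) (Fin.ext (fIter_coe a b hab (m - a) (by omega) x))
end

section
/- Let p : E → B be a map of simplicial objects in a category with pullbacks which is a left fibration or a right fibration (cartesian on all face maps except possibly the bottom, respectively except possibly the top). If B is Segal (the Segal squares of B are pullbacks), then E is Segal. -/
open CategoryTheory Simplicial Opposite

/-- If `p : E → B` is a left fibration (cartesian on all face maps except the
bottom ones) or a right fibration (cartesian on all face maps except the top ones) of
simplicial objects in a category with pullbacks, and `B` is Segal (the Segal squares
`B_{n+2} ≅ B_{n+1} ×_{B_n} B_{n+1}` along bottom and top faces are pullbacks), then `E` is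
Segal. -/
theorem segal_of_fibration {C : Type*} [Category C] [Limits.HasPullbacks C]
    (E B : SimplicialObject C) (p : E ⟶ B)
    (hfib :
      (∀ (n : ℕ) (i : Fin (n + 2)), i ≠ 0 →
        IsPullback (E.δ i) (p.app (op (SimplexCategory.mk (n+1))))
          (p.app (op (SimplexCategory.mk n))) (B.δ i)) ∨
      (∀ (n : ℕ) (i : Fin (n + 2)), i ≠ Fin.last (n+1) →
        IsPullback (E.δ i) (p.app (op (SimplexCategory.mk (n+1))))
          (p.app (op (SimplexCategory.mk n))) (B.δ i)))
    (hSegal : ∀ n : ℕ, IsPullback (B.δ (0 : Fin (n + 3))) (B.δ (Fin.last (n + 2)))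
      (B.δ (Fin.last (n + 1))) (B.δ (0 : Fin (n + 2)))) :
    ∀ n : ℕ, IsPullback (E.δ (0 : Fin (n + 3))) (E.δ (Fin.last (n + 2)))
      (E.δ (Fin.last (n + 1))) (E.δ (0 : Fin (n + 2))) := by
  -- naturality of `p` on face maps
  have nat : ∀ (n : ℕ) (i : Fin (n + 2)),
      E.δ i ≫ p.app (op (SimplexCategory.mk n)) =
        p.app (op (SimplexCategory.mk (n+1))) ≫ B.δ i := by
    intro n i
    exact p.naturality (SimplexCategory.δ i).op
  -- the simplicial identity `δ₀ ≫ δ_⊤ = δ_⊤ ≫ δ₀`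
  have comm : ∀ n : ℕ, E.δ (0 : Fin (n + 3)) ≫ E.δ (Fin.last (n + 1)) =
      E.δ (Fin.last (n + 2)) ≫ E.δ (0 : Fin (n + 2)) := by
    intro n
    have := E.δ_comp_δ (i := (0 : Fin (n + 2))) (j := Fin.last (n + 1)) (Fin.zero_le _)
    simpa [Fin.succ_last] using this.symm
  intro n
  rcases hfib with hL | hR
  · -- left fibration : δ i cartesian for i ≠ 0 ; work with the flipped squares
    have big : IsPullback (E.δ (Fin.last (n + 2)))
        (E.δ (0 : Fin (n + 3)) ≫ p.app (op (SimplexCategory.mk (n+1))))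
        (E.δ (0 : Fin (n + 2)) ≫ p.app (op (SimplexCategory.mk n)))
        (B.δ (Fin.last (n + 1))) := by
      have := ((hL (n+1) (Fin.last (n+2)) (by simp [Fin.ext_iff])).paste_vert
        (hSegal n).flip)
      rwa [← nat, ← nat] at this
    exact (big.of_bot (comm n).symm
      (hL n (Fin.last (n+1)) (by simp [Fin.ext_iff]))).flip
  · -- right fibration : δ i cartesian for i ≠ ⊤
    have big : IsPullback (E.δ (0 : Fin (n + 3)))
        (E.δ (Fin.last (n + 2)) ≫ p.app (op (SimplexCategory.mk (n+1))))
        (E.δ (Fin.last (n + 1)) ≫ p.app (op (SimplexCategory.mk n)))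
        (B.δ (0 : Fin (n + 2))) := by
      have := ((hR (n+1) (0 : Fin (n+3)) (by simp [Fin.ext_iff])).paste_vert
        (hSegal n))
      rwa [← nat, ← nat] at this
    exact big.of_bot (comm n) (hR n (0 : Fin (n+2)) (by simp [Fin.ext_iff]))
end
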